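/- Suppose the monogamy parameters satisfy the uniform boundedness condition and the normed Lipschitz condition. If (S^{F,1}_t, S^{M,1}_t, S^{FM,1}_t)_{t∈[0,T]} and (S^{F,2}_t, S^{M,2}_t, S^{FM,2}_t)_{t∈[0,T]} are two weakly continuous solutions of the mild monogamy limit system with the same initial composition (S^{F,1}_0, S^{M,1}_0, S^{FM,1}_0) = (S^{F,2}_0, S^{M,2}_0, S^{FM,2}_0), then S^{F,1}_t = S^{F,2}_t, S^{M,1}_t = S^{M,2}_t and S^{FM,1}_t = S^{FM,2}_t for every t ∈ [0,T]. -/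

import Mathlib

open MeasureTheory Set

namespace Monogamy6

/-- The age space `A = [0, ω]`. -/
abbrev A (ω : ℝ) : Type := Icc (0:ℝ) ω

/-- The age `0` as an element of `[0, ω]`. -/
def ageZero {ω : ℝ} (hω : 0 ≤ ω) : A ω := ⟨0, Set.left_mem_Icc.mpr hω⟩

/-- A population composition: finite Borel measures describing single females, single
males, and couples (first coordinate: female's age; second coordinate: male's age). -/
structure Comp (ω : ℝ) where
  F : Measure (A ω)
  M : Measure (A ω)
  FM : Measure (A ω × A ω)
  finF : IsFiniteMeasure F
  finM : IsFiniteMeasure M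
  finFM : IsFiniteMeasure FM

/-- The monogamy demographic parameters, as functions of the population composition. -/
structure Params (ω : ℝ) where
  /-- death rate of a married female -/
  hF : Comp ω → A ω × A ω → ℝ
  /-- death rate of a married male -/
  hM : Comp ω → A ω × A ω → ℝ
  /-- death rate of a single female -/
  gF : Comp ω → A ω → ℝ
  /-- death rate of a single male -/
  gM : Comp ω → A ω → ℝ
  /-- couple separation rate -/
  hFM : Comp ω → A ω × A ω → ℝ
  /-- mean birth intensity of daughters from a couple -/
  bF : Comp ω → A ω × A ω → ℝ
  /-- mean birth intensity of sons from a couple -/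
  bM : Comp ω → A ω × A ω → ℝ
  /-- mean birth intensity of daughters from a single female -/
  sF : Comp ω → A ω → ℝ
  /-- mean birth intensity of sons from a single female -/
  sM : Comp ω → A ω → ℝ
  /-- marriage rate -/
  rho : Comp ω → A ω × A ω → ℝ

/-- All parameters are measurable in the age variables. -/
def Params.Meas {ω : ℝ} (p : Params ω) : Prop :=
  ∀ S : Comp ω, Measurable (p.hF S) ∧ Measurable (p.hM S) ∧ Measurable (p.gF S) ∧
    Measurable (p.gM S) ∧ Measurable (p.hFM S) ∧ Measurable (p.bF S) ∧
    Measurable (p.bM S) ∧ Measurable (p.sF S) ∧ Measurable (p.sM S) ∧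
    Measurable (p.rho S)

/-- Uniform boundedness condition: all parameters take values in `[0, C]`. -/
def Params.Bounded {ω : ℝ} (p : Params ω) (C : ℝ) : Prop :=
  ∀ S : Comp ω,
    (∀ s, p.hF S s ∈ Icc (0:ℝ) C) ∧ (∀ s, p.hM S s ∈ Icc (0:ℝ) C) ∧
    (∀ v, p.gF S v ∈ Icc (0:ℝ) C) ∧ (∀ v, p.gM S v ∈ Icc (0:ℝ) C) ∧
    (∀ s, p.hFM S s ∈ Icc (0:ℝ) C) ∧ (∀ s, p.bF S s ∈ Icc (0:ℝ) C) ∧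
    (∀ s, p.bM S s ∈ Icc (0:ℝ) C) ∧ (∀ v, p.sF S v ∈ Icc (0:ℝ) C) ∧
    (∀ v, p.sM S v ∈ Icc (0:ℝ) C) ∧ (∀ s, p.rho S s ∈ Icc (0:ℝ) C)

/-- `‖μ − ν‖ = sup {|(g,μ) − (g,ν)| : g continuous, sup|g| ≤ 1}`. -/
noncomputable def measDist {α : Type*} [MeasurableSpace α] [TopologicalSpace α]
    (μ ν : Measure α) : ℝ :=
  ⨆ f : {f : α → ℝ // Continuous f ∧ ∀ s, |f s| ≤ 1},
    |(∫ s, f.1 s ∂μ) - ∫ s, f.1 s ∂ν|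

/-- The distance `‖S^F − S′^F‖ + ‖S^M − S′^M‖ + ‖S^{FM} − S′^{FM}‖` between compositions. -/
noncomputable def compDist {ω : ℝ} (S S' : Comp ω) : ℝ :=
  measDist S.F S'.F + measDist S.M S'.M + measDist S.FM S'.FM

/-- Normed Lipschitz condition with constant `c`. -/
def Params.Lipschitz {ω : ℝ} (p : Params ω) (c : ℝ) : Prop :=
  ∀ S S' : Comp ω,
    (∀ s, |p.hF S s - p.hF S' s| ≤ c * compDist S S') ∧
    (∀ s, |p.hM S s - p.hM S' s| ≤ c * compDist S S') ∧
    (∀ v, |p.gF S v - p.gF S' v| ≤ c * compDist S S') ∧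
    (∀ v, |p.gM S v - p.gM S' v| ≤ c * compDist S S') ∧
    (∀ s, |p.hFM S s - p.hFM S' s| ≤ c * compDist S S') ∧
    (∀ s, |p.bF S s - p.bF S' s| ≤ c * compDist S S') ∧
    (∀ s, |p.bM S s - p.bM S' s| ≤ c * compDist S S') ∧
    (∀ v, |p.sF S v - p.sF S' v| ≤ c * compDist S S') ∧
    (∀ v, |p.sM S v - p.sM S' v| ≤ c * compDist S S') ∧
    (∀ s, |p.rho S s - p.rho S' s| ≤ c * compDist S S')

/-- The one-dimensional shift operator `Θ̂_r φ (v) = φ(min(v+r, ω))` (for `r ≥ 0`). -/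
noncomputable def shift1 {ω : ℝ} (hω : 0 ≤ ω) (r : ℝ) (φ : A ω → ℝ) (v : A ω) : ℝ :=
  φ (projIcc 0 ω hω ((v : ℝ) + r))

/-- The two-dimensional shift operator
`Θ̂_r ψ (v,w) = ψ(min(v+r, ω), min(w+r, ω))` (for `r ≥ 0`). -/
noncomputable def shift2 {ω : ℝ} (hω : 0 ≤ ω) (r : ℝ) (ψ : A ω × A ω → ℝ)
    (q : A ω × A ω) : ℝ :=
  ψ (projIcc 0 ω hω ((q.1 : ℝ) + r), projIcc 0 ω hω ((q.2 : ℝ) + r))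

/-- The single-female drift term of the mild monogamy limit system (with shift `r`). -/
noncomputable def JF {ω : ℝ} (hω : 0 ≤ ω) (p : Params ω) (S : Comp ω) (r : ℝ)
    (φ : A ω → ℝ) : ℝ :=
  -(∫ v, p.gF S v * shift1 hω r φ v ∂S.F) +
  (∫ q, (p.hM S q + p.hFM S q) * shift1 hω r φ q.1 ∂S.FM) +
  shift1 hω r φ (ageZero hω) * ((∫ q, p.bF S q ∂S.FM) + ∫ v, p.sF S v ∂S.F) -
  ∫ v, (∫ w, shift1 hω r φ v * p.rho S (v, w) ∂S.M) ∂S.F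

/-- The single-male drift term of the mild monogamy limit system (with shift `r`). -/
noncomputable def JM {ω : ℝ} (hω : 0 ≤ ω) (p : Params ω) (S : Comp ω) (r : ℝ)
    (φ : A ω → ℝ) : ℝ :=
  -(∫ w, p.gM S w * shift1 hω r φ w ∂S.M) +
  (∫ q, (p.hF S q + p.hFM S q) * shift1 hω r φ q.2 ∂S.FM) +
  shift1 hω r φ (ageZero hω) * ((∫ q, p.bM S q ∂S.FM) + ∫ v, p.sM S v ∂S.F) -
  ∫ v, (∫ w, shift1 hω r φ w * p.rho S (v, w) ∂S.M) ∂S.F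

/-- The couple drift term of the mild monogamy limit system (with shift `r`). -/
noncomputable def JFM {ω : ℝ} (hω : 0 ≤ ω) (p : Params ω) (S : Comp ω) (r : ℝ)
    (ψ : A ω × A ω → ℝ) : ℝ :=
  -(∫ q, (p.hF S q + p.hM S q + p.hFM S q) * shift2 hω r ψ q ∂S.FM) +
  ∫ v, (∫ w, shift2 hω r ψ (v, w) * p.rho S (v, w) ∂S.M) ∂S.F

/-- `(S_t)_{t∈[0,T]}` satisfies the mild monogamy limit system. -/
def MildSystem {ω : ℝ} (hω : 0 ≤ ω) (T : ℝ) (p : Params ω) (S : ℝ → Comp ω) : Prop :=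
  (∀ φ : A ω → ℝ, Continuous φ → ∀ t ∈ Icc (0:ℝ) T,
    IntervalIntegrable (fun u => JF hω p (S u) (t - u) φ) volume 0 t ∧
    (∫ v, φ v ∂(S t).F) = (∫ v, shift1 hω t φ v ∂(S 0).F) +
      ∫ u in (0:ℝ)..t, JF hω p (S u) (t - u) φ) ∧
  (∀ φ : A ω → ℝ, Continuous φ → ∀ t ∈ Icc (0:ℝ) T,
    IntervalIntegrable (fun u => JM hω p (S u) (t - u) φ) volume 0 t ∧
    (∫ w, φ w ∂(S t).M) = (∫ w, shift1 hω t φ w ∂(S 0).M) +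
      ∫ u in (0:ℝ)..t, JM hω p (S u) (t - u) φ) ∧
  (∀ ψ : A ω × A ω → ℝ, Continuous ψ → ∀ t ∈ Icc (0:ℝ) T,
    IntervalIntegrable (fun u => JFM hω p (S u) (t - u) ψ) volume 0 t ∧
    (∫ q, ψ q ∂(S t).FM) = (∫ q, shift2 hω t ψ q ∂(S 0).FM) +
      ∫ u in (0:ℝ)..t, JFM hω p (S u) (t - u) ψ)

/-- `(S_t)_{t∈[0,T]}` is weakly continuous. -/
def WeaklyContinuous {ω : ℝ} (T : ℝ) (S : ℝ → Comp ω) : Prop :=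
  (∀ f : A ω → ℝ, Continuous f →
    ContinuousOn (fun t => ∫ v, f v ∂(S t).F) (Icc 0 T)) ∧
  (∀ f : A ω → ℝ, Continuous f →
    ContinuousOn (fun t => ∫ w, f w ∂(S t).M) (Icc 0 T)) ∧
  (∀ ψ : A ω × A ω → ℝ, Continuous ψ →
    ContinuousOn (fun t => ∫ q, ψ q ∂(S t).FM) (Icc 0 T))


/-! ### Auxiliary lemmas -/

section GeneralMeasure

variable {X : Type*} [MeasurableSpace X] [TopologicalSpace X]
  (μ ν : Measure X) [IsFiniteMeasure μ] [IsFiniteMeasure ν]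

omit [TopologicalSpace X] in
lemma integrable_of_bdd {q : X → ℝ} (hq : Measurable q) {K : ℝ} (hK : ∀ x, |q x| ≤ K)
    [TopologicalSpace X] [OpensMeasurableSpace X] [SecondCountableTopology X] :
    Integrable q μ :=
  ⟨hq.aestronglyMeasurable, HasFiniteIntegral.of_bounded (C := K) (ae_of_all _ fun x => hK x)⟩

omit [TopologicalSpace X] in
lemma abs_integral_le_mass {q : X → ℝ} {K : ℝ} (hK : ∀ x, |q x| ≤ K) :
    |∫ x, q x ∂μ| ≤ K * (μ univ).toReal := by
  have := norm_integral_le_of_norm_le_const (μ := μ) (f := q) (C := K)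
    (ae_of_all _ fun x => by simpa [Real.norm_eq_abs] using hK x)
  simp only [Real.norm_eq_abs, measureReal_def] at this
  exact this

lemma bddAbove_measDist :
    BddAbove (range fun f : {f : X → ℝ // Continuous f ∧ ∀ s, |f s| ≤ 1} =>
      |(∫ s, f.1 s ∂μ) - ∫ s, f.1 s ∂ν|) := by
  refine ⟨(μ univ).toReal + (ν univ).toReal, ?_⟩
  rintro x ⟨f, rfl⟩
  have h1 := abs_integral_le_mass μ f.2.2
  have h2 := abs_integral_le_mass ν f.2.2
  calc |(∫ s, f.1 s ∂μ) - ∫ s, f.1 s ∂ν| ≤ |∫ s, f.1 s ∂μ| + |∫ s, f.1 s ∂ν| :=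
        abs_sub _ _
    _ ≤ (μ univ).toReal + (ν univ).toReal := by linarith [one_mul (μ univ).toReal]

instance : Nonempty {f : X → ℝ // Continuous f ∧ ∀ s, |f s| ≤ 1} :=
  ⟨⟨(0 : X → ℝ), continuous_const, by simp⟩⟩

lemma measDist_nonneg : 0 ≤ measDist μ ν := by
  have := le_ciSup (bddAbove_measDist μ ν) (⟨(0 : X → ℝ), continuous_const, by simp⟩ :
    {f : X → ℝ // Continuous f ∧ ∀ s, |f s| ≤ 1})
  simpa [measDist] using this

lemma measDist_le_mass : measDist μ ν ≤ (μ univ).toReal + (ν univ).toReal := by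
  refine ciSup_le fun f => ?_
  have h1 := abs_integral_le_mass μ f.2.2
  have h2 := abs_integral_le_mass ν f.2.2
  calc |(∫ s, f.1 s ∂μ) - ∫ s, f.1 s ∂ν| ≤ |∫ s, f.1 s ∂μ| + |∫ s, f.1 s ∂ν| := abs_sub _ _
    _ ≤ _ := by linarith [one_mul (μ univ).toReal]

lemma abs_integral_sub_le_cont {f : X → ℝ} (hf : Continuous f) {K : ℝ} (hK0 : 0 ≤ K)
    (hK : ∀ x, |f x| ≤ K) :
    |(∫ x, f x ∂μ) - ∫ x, f x ∂ν| ≤ K * measDist μ ν := by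
  rcases eq_or_lt_of_le hK0 with h0 | hKpos
  · have hz : ∀ x, f x = 0 := by
      intro x; have h1 := hK x; rw [← h0] at h1
      exact abs_eq_zero.mp (le_antisymm h1 (abs_nonneg _))
    simp [funext hz, ← h0]
  · have hb : ∀ x, |K⁻¹ * f x| ≤ 1 := fun x => by
      rw [abs_mul, abs_of_nonneg (inv_nonneg.mpr hK0)]
      calc K⁻¹ * |f x| ≤ K⁻¹ * K :=
            mul_le_mul_of_nonneg_left (hK x) (inv_nonneg.mpr hK0)
        _ = 1 := inv_mul_cancel₀ hKpos.ne'
    have := le_ciSup (bddAbove_measDist μ ν)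
      (⟨fun x => K⁻¹ * f x, continuous_const.mul hf, hb⟩ :
        {f : X → ℝ // Continuous f ∧ ∀ s, |f s| ≤ 1})
    simp only [integral_const_mul] at this
    rw [← mul_sub, abs_mul, abs_of_nonneg (inv_nonneg.mpr hK0)] at this
    calc |(∫ x, f x ∂μ) - ∫ x, f x ∂ν|
        = K * (K⁻¹ * |(∫ x, f x ∂μ) - ∫ x, f x ∂ν|) := by field_simp
      _ ≤ K * measDist μ ν := mul_le_mul_of_nonneg_left this hK0

end GeneralMeasure

lemma clamp_abs {a b y z : ℝ} (ha : a ≤ z) (hb : z ≤ b) :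
    |max a (min b y) - z| ≤ |y - z| := by
  have hab : a ≤ b := ha.trans hb
  rcases le_total y a with h1 | h1
  · rw [min_eq_right (h1.trans hab), max_eq_left h1, abs_of_nonpos (by linarith),
      abs_of_nonpos (by linarith)]
    linarith
  · rcases le_total y b with h2 | h2
    · rw [min_eq_right h2, max_eq_right h1]
    · rw [min_eq_left h2, max_eq_right hab, abs_of_nonneg (by linarith),
        abs_of_nonneg (by linarith)]
      linarith

section MetricMeasure
variable {X : Type*} [MeasurableSpace X] [MetricSpace X] [SecondCountableTopology X]
  [BorelSpace X] [Nonempty X]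
  (μ ν : Measure X) [IsFiniteMeasure μ] [IsFiniteMeasure ν]

/-- Key duality lemma: the weak distance controls integrals of *measurable* bounded
functions, by density of continuous functions in `L¹`. -/
lemma abs_integral_sub_le_meas {q : X → ℝ} (hq : Measurable q) {K : ℝ}
    (hK : ∀ x, |q x| ≤ K) :
    |(∫ x, q x ∂μ) - ∫ x, q x ∂ν| ≤ K * measDist μ ν := by
  have hK0 : 0 ≤ K := le_trans (abs_nonneg _) (hK (Classical.arbitrary X))
  refine le_of_forall_pos_le_add fun ε hε => ?_
  have hint : Integrable q (μ + ν) := integrable_of_bdd _ hq hK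
  obtain ⟨g, hg, hgi⟩ := hint.exists_boundedContinuous_integral_sub_le (ε := ε) hε
  set h : X → ℝ := fun x => max (-K) (min K (g x)) with hh
  have hhc : Continuous h := continuous_const.max (continuous_const.min g.continuous)
  have hhb : ∀ x, |h x| ≤ K := fun x => by
    rw [abs_le]
    exact ⟨le_max_left _ _, max_le (by linarith) (min_le_left _ _)⟩
  have hqh : ∀ x, |q x - h x| ≤ |q x - g x| := fun x => by
    have := clamp_abs (a := -K) (b := K) (y := g x) (z := q x)
      (neg_le_of_abs_le (hK x)) (le_of_abs_le (hK x))
    rw [abs_sub_comm (q x), abs_sub_comm (q x)]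
    exact this
  have hint1 : Integrable (fun x => |q x - h x|) (μ + ν) :=
    (hint.sub (integrable_of_bdd _ (hhc.measurable) hhb)).abs
  have hsum : (∫ x, |q x - h x| ∂μ) + (∫ x, |q x - h x| ∂ν) ≤ ε := by
    have h1 : (∫ x, |q x - h x| ∂(μ + ν)) ≤ ∫ x, |q x - g x| ∂(μ + ν) := by
      apply integral_mono_of_nonneg (ae_of_all _ fun x => abs_nonneg _)
      · exact (hint.sub hgi).abs.norm.congr (ae_of_all _ fun x => by
          simp [Real.norm_eq_abs, abs_abs])
      · exact ae_of_all _ hqh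
    rw [integral_add_measure (hint1.mono_measure (Measure.le_add_right le_rfl))
      (hint1.mono_measure (Measure.le_add_left le_rfl))] at h1
    calc (∫ x, |q x - h x| ∂μ) + (∫ x, |q x - h x| ∂ν)
        ≤ ∫ x, |q x - g x| ∂(μ + ν) := h1
      _ ≤ ε := by
          have heq : (fun x => |q x - g x|) = fun x => ‖q x - g x‖ := by
            funext x; rw [Real.norm_eq_abs]
          rw [heq]; exact hg
  have hqμ : Integrable q μ := hint.mono_measure (Measure.le_add_right le_rfl)
  have hqν : Integrable q ν := hint.mono_measure (Measure.le_add_left le_rfl)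
  have hhμ : Integrable h μ := integrable_of_bdd _ hhc.measurable hhb
  have hhν : Integrable h ν := integrable_of_bdd _ hhc.measurable hhb
  have hmid : |(∫ x, h x ∂μ) - ∫ x, h x ∂ν| ≤ K * measDist μ ν :=
    abs_integral_sub_le_cont μ ν hhc hK0 hhb
  have e1 : |(∫ x, q x ∂μ) - ∫ x, h x ∂μ| ≤ ∫ x, |q x - h x| ∂μ := by
    rw [← integral_sub hqμ hhμ]
    simpa [Real.norm_eq_abs] using norm_integral_le_integral_norm (μ := μ)
      (f := fun x => q x - h x)
  have e2 : |(∫ x, q x ∂ν) - ∫ x, h x ∂ν| ≤ ∫ x, |q x - h x| ∂ν := by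
    rw [← integral_sub hqν hhν]
    simpa [Real.norm_eq_abs] using norm_integral_le_integral_norm (μ := ν)
      (f := fun x => q x - h x)
  have tri : |(∫ x, q x ∂μ) - ∫ x, q x ∂ν| ≤
      |(∫ x, q x ∂μ) - ∫ x, h x ∂μ| + |(∫ x, h x ∂μ) - ∫ x, h x ∂ν|
        + |(∫ x, h x ∂ν) - ∫ x, q x ∂ν| := by
    calc |(∫ x, q x ∂μ) - ∫ x, q x ∂ν| = |((∫ x, q x ∂μ) - ∫ x, h x ∂μ)
          + ((∫ x, h x ∂μ) - ∫ x, h x ∂ν) + ((∫ x, h x ∂ν) - ∫ x, q x ∂ν)| := by ring_nf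
      _ ≤ _ := by
          refine (abs_add_le _ _).trans ?_
          gcongr
          exact abs_add_le _ _
  rw [abs_sub_comm (∫ x, h x ∂ν)] at tri
  linarith

/-- If the weak distance vanishes, the measures are equal. -/
lemma eq_of_measDist_eq_zero (h : measDist μ ν = 0) : μ = ν := by
  apply ext_of_forall_lintegral_eq_of_IsFiniteMeasure
  intro f
  have hfc : Continuous fun x => (f x : ℝ) := NNReal.continuous_coe.comp f.continuous
  obtain ⟨C, hC⟩ := f.bounded
  set x0 := Classical.arbitrary X
  have hK : ∀ x, |(f x : ℝ)| ≤ (f x0 : ℝ) + C := by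
    intro x
    rw [abs_of_nonneg (f x).coe_nonneg]
    have h1 := hC x x0
    rw [NNReal.dist_eq] at h1
    have := le_abs_self ((f x : ℝ) - (f x0 : ℝ))
    linarith
  have hK0 : 0 ≤ (f x0 : ℝ) + C := le_trans (abs_nonneg _) (hK x0)
  have heq : (∫ x, (f x : ℝ) ∂μ) = ∫ x, (f x : ℝ) ∂ν := by
    have h1 := abs_integral_sub_le_cont μ ν hfc hK0 hK
    rw [h, mul_zero] at h1
    have h2 := abs_nonneg ((∫ x, (f x : ℝ) ∂μ) - ∫ x, (f x : ℝ) ∂ν)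
    have h3 := abs_eq_zero.mp (le_antisymm h1 h2)
    linarith
  have hiμ : Integrable (fun x => (f x : ℝ)) μ := integrable_of_bdd _ hfc.measurable hK
  have hiν : Integrable (fun x => (f x : ℝ)) ν := integrable_of_bdd _ hfc.measurable hK
  have e1 := ofReal_integral_eq_lintegral_ofReal hiμ (ae_of_all _ fun x => (f x).coe_nonneg)
  have e2 := ofReal_integral_eq_lintegral_ofReal hiν (ae_of_all _ fun x => (f x).coe_nonneg)
  simp only [ENNReal.ofReal_coe_nnreal] at e1 e2
  rw [← e1, ← e2, heq]

lemma integral_diff_bound (μ μ' : Measure X) [IsFiniteMeasure μ] [IsFiniteMeasure μ']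
    {q q' : X → ℝ} (hq : Measurable q) (hq' : Measurable q') {K ε B : ℝ}
    (hKq : ∀ x, |q x| ≤ K) (hKq' : ∀ x, |q' x| ≤ K) (hε : 0 ≤ ε)
    (hd : ∀ x, |q x - q' x| ≤ ε) (hB : (μ univ).toReal ≤ B) :
    |(∫ x, q x ∂μ) - ∫ x, q' x ∂μ'| ≤ ε * B + K * measDist μ μ' := by
  have h1 : |(∫ x, q x ∂μ) - ∫ x, q' x ∂μ| ≤ ε * B := by
    rw [← integral_sub (integrable_of_bdd μ hq hKq) (integrable_of_bdd μ hq' hKq')]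
    calc |∫ x, (q x - q' x) ∂μ| ≤ ε * (μ univ).toReal := abs_integral_le_mass μ hd
      _ ≤ ε * B := mul_le_mul_of_nonneg_left hB hε
  have h2 := abs_integral_sub_le_meas μ μ' hq' hKq'
  calc |(∫ x, q x ∂μ) - ∫ x, q' x ∂μ'| ≤
      |(∫ x, q x ∂μ) - ∫ x, q' x ∂μ| + |(∫ x, q' x ∂μ) - ∫ x, q' x ∂μ'| :=
        abs_sub_le _ _ _
    _ ≤ ε * B + K * measDist μ μ' := add_le_add h1 h2

lemma double_int_bound (F F' M M' : Measure X) [IsFiniteMeasure F] [IsFiniteMeasure F']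
    [IsFiniteMeasure M] [IsFiniteMeasure M'] {Φ ρ ρ' : X × X → ℝ}
    (hΦ : Measurable Φ) (hΦ1 : ∀ s, |Φ s| ≤ 1) (hρ : Measurable ρ) (hρ' : Measurable ρ')
    {Cq ε B : ℝ} (hCq : ∀ s, |ρ s| ≤ Cq) (hCq' : ∀ s, |ρ' s| ≤ Cq) (hε : 0 ≤ ε)
    (hd : ∀ s, |ρ s - ρ' s| ≤ ε) (hB : 0 ≤ B) (hBF : (F univ).toReal ≤ B)
    (hBM : (M univ).toReal ≤ B) (hBM' : (M' univ).toReal ≤ B) :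
    |(∫ v, ∫ w, Φ (v, w) * ρ (v, w) ∂M ∂F) - ∫ v, ∫ w, Φ (v, w) * ρ' (v, w) ∂M' ∂F'| ≤
      ε * B * B + Cq * B * measDist M M' + Cq * B * measDist F F' := by
  have hCq0 : 0 ≤ Cq := le_trans (abs_nonneg _) (hCq (Classical.arbitrary _))
  have hbρ : ∀ s, |Φ s * ρ s| ≤ Cq := fun s => by
    rw [abs_mul]
    calc |Φ s| * |ρ s| ≤ 1 * Cq := mul_le_mul (hΦ1 s) (hCq s) (abs_nonneg _) zero_le_one
      _ = Cq := one_mul _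
  have hbρ' : ∀ s, |Φ s * ρ' s| ≤ Cq := fun s => by
    rw [abs_mul]
    calc |Φ s| * |ρ' s| ≤ 1 * Cq := mul_le_mul (hΦ1 s) (hCq' s) (abs_nonneg _) zero_le_one
      _ = Cq := one_mul _
  set a : X → ℝ := fun v => ∫ w, Φ (v, w) * ρ (v, w) ∂M with ha
  set a' : X → ℝ := fun v => ∫ w, Φ (v, w) * ρ' (v, w) ∂M with ha'
  set a'' : X → ℝ := fun v => ∫ w, Φ (v, w) * ρ' (v, w) ∂M' with ha''
  have hma : Measurable a := by
    have h : StronglyMeasurable fun s : X × X => Φ s * ρ s := (hΦ.mul hρ).stronglyMeasurable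
    exact h.integral_prod_right'.measurable
  have hma' : Measurable a' := by
    have h : StronglyMeasurable fun s : X × X => Φ s * ρ' s := (hΦ.mul hρ').stronglyMeasurable
    exact h.integral_prod_right'.measurable
  have hma'' : Measurable a'' := by
    have h : StronglyMeasurable fun s : X × X => Φ s * ρ' s := (hΦ.mul hρ').stronglyMeasurable
    exact h.integral_prod_right'.measurable
  have hba : ∀ v, |a v| ≤ Cq * B := fun v =>
    le_trans (abs_integral_le_mass M fun w => hbρ (v, w))
      (mul_le_mul_of_nonneg_left hBM hCq0)
  have hba' : ∀ v, |a' v| ≤ Cq * B := fun v =>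
    le_trans (abs_integral_le_mass M fun w => hbρ' (v, w))
      (mul_le_mul_of_nonneg_left hBM hCq0)
  have hba'' : ∀ v, |a'' v| ≤ Cq * B := fun v =>
    le_trans (abs_integral_le_mass M' fun w => hbρ' (v, w))
      (mul_le_mul_of_nonneg_left hBM' hCq0)
  have hs1 : |(∫ v, a v ∂F) - ∫ v, a' v ∂F| ≤ ε * B * B := by
    have hpt : ∀ v, |a v - a' v| ≤ ε * B := by
      intro v
      have i1 : Integrable (fun w => Φ (v, w) * ρ (v, w)) M :=
        integrable_of_bdd _ ((hΦ.mul hρ).comp measurable_prodMk_left) fun w => hbρ (v, w)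
      have i2 : Integrable (fun w => Φ (v, w) * ρ' (v, w)) M :=
        integrable_of_bdd _ ((hΦ.mul hρ').comp measurable_prodMk_left) fun w => hbρ' (v, w)
      rw [ha, ha']
      simp only []
      rw [← integral_sub i1 i2]
      have hptw : ∀ w, |Φ (v, w) * ρ (v, w) - Φ (v, w) * ρ' (v, w)| ≤ ε := by
        intro w
        rw [← mul_sub, abs_mul]
        calc |Φ (v, w)| * |ρ (v, w) - ρ' (v, w)| ≤ 1 * ε :=
            mul_le_mul (hΦ1 _) (hd _) (abs_nonneg _) zero_le_one
          _ = ε := one_mul _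
      calc |∫ w, (Φ (v, w) * ρ (v, w) - Φ (v, w) * ρ' (v, w)) ∂M| ≤ ε * (M univ).toReal :=
          abs_integral_le_mass M hptw
        _ ≤ ε * B := mul_le_mul_of_nonneg_left hBM hε
    rw [← integral_sub (integrable_of_bdd F hma hba) (integrable_of_bdd F hma' hba')]
    calc |∫ v, (a v - a' v) ∂F| ≤ ε * B * (F univ).toReal := abs_integral_le_mass F hpt
      _ ≤ ε * B * B := mul_le_mul_of_nonneg_left hBF (mul_nonneg hε hB)
  have hs2 : |(∫ v, a' v ∂F) - ∫ v, a'' v ∂F| ≤ Cq * measDist M M' * B := by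
    have hpt : ∀ v, |a' v - a'' v| ≤ Cq * measDist M M' := by
      intro v
      exact abs_integral_sub_le_meas (q := fun w => Φ (v, w) * ρ' (v, w)) M M'
        ((hΦ.mul hρ').comp measurable_prodMk_left) (fun w => hbρ' (v, w))
    rw [← integral_sub (integrable_of_bdd F hma' hba') (integrable_of_bdd F hma'' hba'')]
    calc |∫ v, (a' v - a'' v) ∂F| ≤ Cq * measDist M M' * (F univ).toReal :=
        abs_integral_le_mass F hpt
      _ ≤ Cq * measDist M M' * B := mul_le_mul_of_nonneg_left hBF
          (mul_nonneg hCq0 (measDist_nonneg M M'))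
  have hs3 : |(∫ v, a'' v ∂F) - ∫ v, a'' v ∂F'| ≤ Cq * B * measDist F F' :=
    abs_integral_sub_le_meas F F' hma'' hba''
  calc |(∫ v, a v ∂F) - ∫ v, a'' v ∂F'| ≤
      |(∫ v, a v ∂F) - ∫ v, a' v ∂F| + |(∫ v, a' v ∂F) - ∫ v, a'' v ∂F|
        + |(∫ v, a'' v ∂F) - ∫ v, a'' v ∂F'| :=
          le_trans (abs_sub_le _ (∫ v, a' v ∂F) _)
            (by linarith [abs_sub_le (∫ v, a' v ∂F) (∫ v, a'' v ∂F) (∫ v, a'' v ∂F')])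
    _ ≤ ε * B * B + Cq * B * measDist M M' + Cq * B * measDist F F' := by
        nlinarith [hs1, hs2, hs3]
end MetricMeasure


section ProblemSpecific
variable {ω : ℝ}

lemma shift1_cont (hω : 0 ≤ ω) (r : ℝ) {φ : A ω → ℝ} (hφ : Continuous φ) :
    Continuous (shift1 hω r φ) :=
  hφ.comp (continuous_projIcc.comp (continuous_subtype_val.add continuous_const))

lemma shift2_cont (hω : 0 ≤ ω) (r : ℝ) {ψ : A ω × A ω → ℝ} (hψ : Continuous ψ) :
    Continuous (shift2 hω r ψ) :=
  hψ.comp ((continuous_projIcc.comp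
      ((continuous_subtype_val.comp continuous_fst).add continuous_const)).prodMk
    (continuous_projIcc.comp
      ((continuous_subtype_val.comp continuous_snd).add continuous_const)))

lemma shift1_abs (hω : 0 ≤ ω) (r : ℝ) {φ : A ω → ℝ} (hφ1 : ∀ v, |φ v| ≤ 1) :
    ∀ v, |shift1 hω r φ v| ≤ 1 := fun v => hφ1 _

lemma shift2_abs (hω : 0 ≤ ω) (r : ℝ) {ψ : A ω × A ω → ℝ} (hψ1 : ∀ s, |ψ s| ≤ 1) :
    ∀ s, |shift2 hω r ψ s| ≤ 1 := fun s => hψ1 _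

lemma abs_le_of_Icc {x C : ℝ} (h : x ∈ Icc (0:ℝ) C) : |x| ≤ C := by
  rw [abs_of_nonneg h.1]; exact h.2

lemma abs_mul_le_one {x y K : ℝ} (hx : |x| ≤ K) (hy : |y| ≤ 1) : |x * y| ≤ K := by
  have hK0 : 0 ≤ K := le_trans (abs_nonneg _) hx
  rw [abs_mul]
  calc |x| * |y| ≤ K * 1 := mul_le_mul hx hy (abs_nonneg _) hK0
    _ = K := mul_one _

lemma one_mul_abs_le {x y : ℝ} (hx : |x| ≤ 1) : |x * y| ≤ |y| := by
  rw [abs_mul]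
  calc |x| * |y| ≤ 1 * |y| := mul_le_mul_of_nonneg_right hx (abs_nonneg _)
    _ = |y| := one_mul _

lemma compDist_nonneg (S S' : Comp ω) : 0 ≤ compDist S S' := by
  haveI := S.finF; haveI := S.finM; haveI := S.finFM
  haveI := S'.finF; haveI := S'.finM; haveI := S'.finFM
  have h1 := measDist_nonneg S.F S'.F
  have h2 := measDist_nonneg S.M S'.M
  have h3 := measDist_nonneg S.FM S'.FM
  unfold compDist
  linarith

/-- The Lipschitz-type bound for the single-female drift term. -/
lemma JF_diff (hω : 0 ≤ ω) (hωpos : 0 < ω) (p : Params ω) (hpmeas : p.Meas)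
    {C : ℝ} (hbdd : p.Bounded C) {c : ℝ} (hc : 0 ≤ c) (hlip : p.Lipschitz c)
    (S S' : Comp ω) {B : ℝ} (hB : 0 ≤ B)
    (hSF : (S.F univ).toReal ≤ B) (hSM : (S.M univ).toReal ≤ B)
    (hSFM : (S.FM univ).toReal ≤ B)
    (hS'F : (S'.F univ).toReal ≤ B) (hS'M : (S'.M univ).toReal ≤ B)
    (hS'FM : (S'.FM univ).toReal ≤ B)
    (r : ℝ) {φ : A ω → ℝ} (hφ : Continuous φ) (hφ1 : ∀ v, |φ v| ≤ 1) :
    |JF hω p S r φ - JF hω p S' r φ| ≤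
      (5 * c * B + c * B ^ 2 + 5 * C + 2 * C * B) * compDist S S' := by
  haveI := S.finF; haveI := S.finM; haveI := S.finFM
  haveI := S'.finF; haveI := S'.finM; haveI := S'.finFM
  haveI : Nonempty (A ω) := ⟨ageZero hω⟩
  obtain ⟨P1, P2, P3, P4, P5, P6, P7, P8, P9, P10⟩ := hbdd S
  obtain ⟨Q1, Q2, Q3, Q4, Q5, Q6, Q7, Q8, Q9, Q10⟩ := hbdd S'
  obtain ⟨L1, L2, L3, L4, L5, L6, L7, L8, L9, L10⟩ := hlip S S'
  obtain ⟨m1, m2, m3, m4, m5, m6, m7, m8, m9, m10⟩ := hpmeas S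
  obtain ⟨n1, n2, n3, n4, n5, n6, n7, n8, n9, n10⟩ := hpmeas S'
  have hC0 : 0 ≤ C := le_trans (P3 (ageZero hω)).1 (P3 (ageZero hω)).2
  have hsum : compDist S S' = measDist S.F S'.F + measDist S.M S'.M
      + measDist S.FM S'.FM := rfl
  set d := compDist S S' with hdd
  have hd0 : 0 ≤ d := compDist_nonneg S S'
  set dF := measDist S.F S'.F with hdF
  set dM := measDist S.M S'.M with hdM
  set dFM := measDist S.FM S'.FM with hdFM
  have hdF0 : 0 ≤ dF := measDist_nonneg _ _
  have hdM0 : 0 ≤ dM := measDist_nonneg _ _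
  have hdFM0 : 0 ≤ dFM := measDist_nonneg _ _
  have sφc : Continuous (shift1 hω r φ) := shift1_cont hω r hφ
  have sφ1 : ∀ v, |shift1 hω r φ v| ≤ 1 := shift1_abs hω r hφ1
  have hcd : 0 ≤ c * d := mul_nonneg hc hd0
  have hCB0 : 0 ≤ C * B := mul_nonneg hC0 hB
  have hfF : C * dF ≤ C * d := mul_le_mul_of_nonneg_left (by linarith) hC0
  have hfM : C * dM ≤ C * d := mul_le_mul_of_nonneg_left (by linarith) hC0
  have hfFM : C * dFM ≤ C * d := mul_le_mul_of_nonneg_left (by linarith) hC0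
  have hfBF : C * B * dF ≤ C * B * d := mul_le_mul_of_nonneg_left (by linarith) hCB0
  have hfBM : C * B * dM ≤ C * B * d := mul_le_mul_of_nonneg_left (by linarith) hCB0
  have htotal : (c * d * B + C * dF) + ((c * d + c * d) * B + (C + C) * dFM)
      + ((c * d * B + C * dFM) + (c * d * B + C * dF))
      + (c * d * B * B + C * B * dM + C * B * dF)
      ≤ (5 * c * B + c * B ^ 2 + 5 * C + 2 * C * B) * d := by nlinarith
  -- Term 1
  have hT1 : |(∫ v, p.gF S v * shift1 hω r φ v ∂S.F)
      - ∫ v, p.gF S' v * shift1 hω r φ v ∂S'.F| ≤ c * d * B + C * dF :=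
    integral_diff_bound S.F S'.F (m3.mul sφc.measurable) (n3.mul sφc.measurable)
      (fun v => abs_mul_le_one (abs_le_of_Icc (P3 v)) (sφ1 v))
      (fun v => abs_mul_le_one (abs_le_of_Icc (Q3 v)) (sφ1 v))
      hcd
      (fun v => by simp only [Pi.mul_apply]; rw [← sub_mul]; exact abs_mul_le_one (L3 v) (sφ1 v))
      hSF
  -- Term 2
  have hT2 : |(∫ q, (p.hM S q + p.hFM S q) * shift1 hω r φ q.1 ∂S.FM)
      - ∫ q, (p.hM S' q + p.hFM S' q) * shift1 hω r φ q.1 ∂S'.FM| ≤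
      (c * d + c * d) * B + (C + C) * dFM :=
    integral_diff_bound S.FM S'.FM
      ((m2.add m5).mul (sφc.measurable.comp measurable_fst))
      ((n2.add n5).mul (sφc.measurable.comp measurable_fst))
      (fun s => abs_mul_le_one
        (le_trans (abs_add_le _ _) (add_le_add (abs_le_of_Icc (P2 s)) (abs_le_of_Icc (P5 s))))
        (sφ1 _))
      (fun s => abs_mul_le_one
        (le_trans (abs_add_le _ _) (add_le_add (abs_le_of_Icc (Q2 s)) (abs_le_of_Icc (Q5 s))))
        (sφ1 _))
      (by linarith)
      (fun s => by
        simp only [Pi.mul_apply, Pi.add_apply, Function.comp_apply]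
        rw [← sub_mul]
        refine abs_mul_le_one ?_ (sφ1 _)
        have he : p.hM S s + p.hFM S s - (p.hM S' s + p.hFM S' s)
            = (p.hM S s - p.hM S' s) + (p.hFM S s - p.hFM S' s) := by ring
        rw [he]
        exact le_trans (abs_add_le _ _) (add_le_add (L2 s) (L5 s)))
      hSFM
  -- Term 3
  have hT3a : |(∫ q, p.bF S q ∂S.FM) - ∫ q, p.bF S' q ∂S'.FM| ≤ c * d * B + C * dFM :=
    integral_diff_bound S.FM S'.FM m6 n6 (fun s => abs_le_of_Icc (P6 s))
      (fun s => abs_le_of_Icc (Q6 s)) hcd L6 hSFM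
  have hT3b : |(∫ v, p.sF S v ∂S.F) - ∫ v, p.sF S' v ∂S'.F| ≤ c * d * B + C * dF :=
    integral_diff_bound S.F S'.F m8 n8 (fun v => abs_le_of_Icc (P8 v))
      (fun v => abs_le_of_Icc (Q8 v)) hcd L8 hSF
  have hT3 : |shift1 hω r φ (ageZero hω) * ((∫ q, p.bF S q ∂S.FM) + ∫ v, p.sF S v ∂S.F)
      - shift1 hω r φ (ageZero hω) * ((∫ q, p.bF S' q ∂S'.FM) + ∫ v, p.sF S' v ∂S'.F)| ≤
      (c * d * B + C * dFM) + (c * d * B + C * dF) := by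
    rw [← mul_sub]
    refine le_trans (one_mul_abs_le (sφ1 _)) ?_
    have he : (∫ q, p.bF S q ∂S.FM) + (∫ v, p.sF S v ∂S.F)
        - ((∫ q, p.bF S' q ∂S'.FM) + ∫ v, p.sF S' v ∂S'.F)
        = ((∫ q, p.bF S q ∂S.FM) - ∫ q, p.bF S' q ∂S'.FM)
          + ((∫ v, p.sF S v ∂S.F) - ∫ v, p.sF S' v ∂S'.F) := by ring
    rw [he]
    exact le_trans (abs_add_le _ _) (add_le_add hT3a hT3b)
  -- Term 4
  have hT4 : |(∫ v, (∫ w, shift1 hω r φ v * p.rho S (v, w) ∂S.M) ∂S.F)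
      - ∫ v, (∫ w, shift1 hω r φ v * p.rho S' (v, w) ∂S'.M) ∂S'.F| ≤
      c * d * B * B + C * B * dM + C * B * dF :=
    double_int_bound S.F S'.F S.M S'.M (Φ := fun s => shift1 hω r φ s.1)
      (sφc.measurable.comp measurable_fst) (fun s => sφ1 s.1) m10 n10
      (fun s => abs_le_of_Icc (P10 s)) (fun s => abs_le_of_Icc (Q10 s))
      hcd L10 hB hSF hSM hS'M
  unfold JF
  set t1 := (∫ v, p.gF S v * shift1 hω r φ v ∂S.F) with ht1
  set t1' := (∫ v, p.gF S' v * shift1 hω r φ v ∂S'.F) with ht1'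
  set t2 := (∫ q, (p.hM S q + p.hFM S q) * shift1 hω r φ q.1 ∂S.FM) with ht2
  set t2' := (∫ q, (p.hM S' q + p.hFM S' q) * shift1 hω r φ q.1 ∂S'.FM) with ht2'
  set t3 := shift1 hω r φ (ageZero hω) * ((∫ q, p.bF S q ∂S.FM) + ∫ v, p.sF S v ∂S.F)
    with ht3
  set t3' := shift1 hω r φ (ageZero hω)
    * ((∫ q, p.bF S' q ∂S'.FM) + ∫ v, p.sF S' v ∂S'.F) with ht3'
  set t4 := (∫ v, (∫ w, shift1 hω r φ v * p.rho S (v, w) ∂S.M) ∂S.F) with ht4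
  set t4' := (∫ v, (∫ w, shift1 hω r φ v * p.rho S' (v, w) ∂S'.M) ∂S'.F) with ht4'
  obtain ⟨a1, b1⟩ := abs_le.mp hT1
  obtain ⟨a2, b2⟩ := abs_le.mp hT2
  obtain ⟨a3, b3⟩ := abs_le.mp hT3
  obtain ⟨a4, b4⟩ := abs_le.mp hT4
  rw [abs_le]
  constructor <;> linarith

/-- The Lipschitz-type bound for the single-male drift term. -/
lemma JM_diff (hω : 0 ≤ ω) (hωpos : 0 < ω) (p : Params ω) (hpmeas : p.Meas)
    {C : ℝ} (hbdd : p.Bounded C) {c : ℝ} (hc : 0 ≤ c) (hlip : p.Lipschitz c)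
    (S S' : Comp ω) {B : ℝ} (hB : 0 ≤ B)
    (hSF : (S.F univ).toReal ≤ B) (hSM : (S.M univ).toReal ≤ B)
    (hSFM : (S.FM univ).toReal ≤ B)
    (hS'F : (S'.F univ).toReal ≤ B) (hS'M : (S'.M univ).toReal ≤ B)
    (hS'FM : (S'.FM univ).toReal ≤ B)
    (r : ℝ) {φ : A ω → ℝ} (hφ : Continuous φ) (hφ1 : ∀ v, |φ v| ≤ 1) :
    |JM hω p S r φ - JM hω p S' r φ| ≤
      (5 * c * B + c * B ^ 2 + 5 * C + 2 * C * B) * compDist S S' := by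
  haveI := S.finF; haveI := S.finM; haveI := S.finFM
  haveI := S'.finF; haveI := S'.finM; haveI := S'.finFM
  haveI : Nonempty (A ω) := ⟨ageZero hω⟩
  obtain ⟨P1, P2, P3, P4, P5, P6, P7, P8, P9, P10⟩ := hbdd S
  obtain ⟨Q1, Q2, Q3, Q4, Q5, Q6, Q7, Q8, Q9, Q10⟩ := hbdd S'
  obtain ⟨L1, L2, L3, L4, L5, L6, L7, L8, L9, L10⟩ := hlip S S'
  obtain ⟨m1, m2, m3, m4, m5, m6, m7, m8, m9, m10⟩ := hpmeas S
  obtain ⟨n1, n2, n3, n4, n5, n6, n7, n8, n9, n10⟩ := hpmeas S'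
  have hC0 : 0 ≤ C := le_trans (P3 (ageZero hω)).1 (P3 (ageZero hω)).2
  have hsum : compDist S S' = measDist S.F S'.F + measDist S.M S'.M
      + measDist S.FM S'.FM := rfl
  set d := compDist S S' with hdd
  have hd0 : 0 ≤ d := compDist_nonneg S S'
  set dF := measDist S.F S'.F with hdF
  set dM := measDist S.M S'.M with hdM
  set dFM := measDist S.FM S'.FM with hdFM
  have hdF0 : 0 ≤ dF := measDist_nonneg _ _
  have hdM0 : 0 ≤ dM := measDist_nonneg _ _
  have hdFM0 : 0 ≤ dFM := measDist_nonneg _ _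
  have sφc : Continuous (shift1 hω r φ) := shift1_cont hω r hφ
  have sφ1 : ∀ v, |shift1 hω r φ v| ≤ 1 := shift1_abs hω r hφ1
  have hcd : 0 ≤ c * d := mul_nonneg hc hd0
  have hCB0 : 0 ≤ C * B := mul_nonneg hC0 hB
  have hfF : C * dF ≤ C * d := mul_le_mul_of_nonneg_left (by linarith) hC0
  have hfM : C * dM ≤ C * d := mul_le_mul_of_nonneg_left (by linarith) hC0
  have hfFM : C * dFM ≤ C * d := mul_le_mul_of_nonneg_left (by linarith) hC0
  have hfBF : C * B * dF ≤ C * B * d := mul_le_mul_of_nonneg_left (by linarith) hCB0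
  have hfBM : C * B * dM ≤ C * B * d := mul_le_mul_of_nonneg_left (by linarith) hCB0
  have htotal : (c * d * B + C * dM) + ((c * d + c * d) * B + (C + C) * dFM)
      + ((c * d * B + C * dFM) + (c * d * B + C * dF))
      + (c * d * B * B + C * B * dM + C * B * dF)
      ≤ (5 * c * B + c * B ^ 2 + 5 * C + 2 * C * B) * d := by nlinarith
  -- Term 1
  have hT1 : |(∫ w, p.gM S w * shift1 hω r φ w ∂S.M)
      - ∫ w, p.gM S' w * shift1 hω r φ w ∂S'.M| ≤ c * d * B + C * dM :=
    integral_diff_bound S.M S'.M (m4.mul sφc.measurable) (n4.mul sφc.measurable)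
      (fun v => abs_mul_le_one (abs_le_of_Icc (P4 v)) (sφ1 v))
      (fun v => abs_mul_le_one (abs_le_of_Icc (Q4 v)) (sφ1 v))
      hcd
      (fun v => by simp only [Pi.mul_apply]; rw [← sub_mul]; exact abs_mul_le_one (L4 v) (sφ1 v))
      hSM
  -- Term 2
  have hT2 : |(∫ q, (p.hF S q + p.hFM S q) * shift1 hω r φ q.2 ∂S.FM)
      - ∫ q, (p.hF S' q + p.hFM S' q) * shift1 hω r φ q.2 ∂S'.FM| ≤
      (c * d + c * d) * B + (C + C) * dFM :=
    integral_diff_bound S.FM S'.FM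
      ((m1.add m5).mul (sφc.measurable.comp measurable_snd))
      ((n1.add n5).mul (sφc.measurable.comp measurable_snd))
      (fun s => abs_mul_le_one
        (le_trans (abs_add_le _ _) (add_le_add (abs_le_of_Icc (P1 s)) (abs_le_of_Icc (P5 s))))
        (sφ1 _))
      (fun s => abs_mul_le_one
        (le_trans (abs_add_le _ _) (add_le_add (abs_le_of_Icc (Q1 s)) (abs_le_of_Icc (Q5 s))))
        (sφ1 _))
      (by linarith)
      (fun s => by
        simp only [Pi.mul_apply, Pi.add_apply, Function.comp_apply]
        rw [← sub_mul]
        refine abs_mul_le_one ?_ (sφ1 _)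
        have he : p.hF S s + p.hFM S s - (p.hF S' s + p.hFM S' s)
            = (p.hF S s - p.hF S' s) + (p.hFM S s - p.hFM S' s) := by ring
        rw [he]
        exact le_trans (abs_add_le _ _) (add_le_add (L1 s) (L5 s)))
      hSFM
  -- Term 3
  have hT3a : |(∫ q, p.bM S q ∂S.FM) - ∫ q, p.bM S' q ∂S'.FM| ≤ c * d * B + C * dFM :=
    integral_diff_bound S.FM S'.FM m7 n7 (fun s => abs_le_of_Icc (P7 s))
      (fun s => abs_le_of_Icc (Q7 s)) hcd L7 hSFM
  have hT3b : |(∫ v, p.sM S v ∂S.F) - ∫ v, p.sM S' v ∂S'.F| ≤ c * d * B + C * dF :=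
    integral_diff_bound S.F S'.F m9 n9 (fun v => abs_le_of_Icc (P9 v))
      (fun v => abs_le_of_Icc (Q9 v)) hcd L9 hSF
  have hT3 : |shift1 hω r φ (ageZero hω) * ((∫ q, p.bM S q ∂S.FM) + ∫ v, p.sM S v ∂S.F)
      - shift1 hω r φ (ageZero hω) * ((∫ q, p.bM S' q ∂S'.FM) + ∫ v, p.sM S' v ∂S'.F)| ≤
      (c * d * B + C * dFM) + (c * d * B + C * dF) := by
    rw [← mul_sub]
    refine le_trans (one_mul_abs_le (sφ1 _)) ?_
    have he : (∫ q, p.bM S q ∂S.FM) + (∫ v, p.sM S v ∂S.F)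
        - ((∫ q, p.bM S' q ∂S'.FM) + ∫ v, p.sM S' v ∂S'.F)
        = ((∫ q, p.bM S q ∂S.FM) - ∫ q, p.bM S' q ∂S'.FM)
          + ((∫ v, p.sM S v ∂S.F) - ∫ v, p.sM S' v ∂S'.F) := by ring
    rw [he]
    exact le_trans (abs_add_le _ _) (add_le_add hT3a hT3b)
  -- Term 4
  have hT4 : |(∫ v, (∫ w, shift1 hω r φ w * p.rho S (v, w) ∂S.M) ∂S.F)
      - ∫ v, (∫ w, shift1 hω r φ w * p.rho S' (v, w) ∂S'.M) ∂S'.F| ≤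
      c * d * B * B + C * B * dM + C * B * dF :=
    double_int_bound S.F S'.F S.M S'.M (Φ := fun s => shift1 hω r φ s.2)
      (sφc.measurable.comp measurable_snd) (fun s => sφ1 s.2) m10 n10
      (fun s => abs_le_of_Icc (P10 s)) (fun s => abs_le_of_Icc (Q10 s))
      hcd L10 hB hSF hSM hS'M
  unfold JM
  set t1 := (∫ w, p.gM S w * shift1 hω r φ w ∂S.M) with ht1
  set t1' := (∫ w, p.gM S' w * shift1 hω r φ w ∂S'.M) with ht1'
  set t2 := (∫ q, (p.hF S q + p.hFM S q) * shift1 hω r φ q.2 ∂S.FM) with ht2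
  set t2' := (∫ q, (p.hF S' q + p.hFM S' q) * shift1 hω r φ q.2 ∂S'.FM) with ht2'
  set t3 := shift1 hω r φ (ageZero hω) * ((∫ q, p.bM S q ∂S.FM) + ∫ v, p.sM S v ∂S.F)
    with ht3
  set t3' := shift1 hω r φ (ageZero hω)
    * ((∫ q, p.bM S' q ∂S'.FM) + ∫ v, p.sM S' v ∂S'.F) with ht3'
  set t4 := (∫ v, (∫ w, shift1 hω r φ w * p.rho S (v, w) ∂S.M) ∂S.F) with ht4
  set t4' := (∫ v, (∫ w, shift1 hω r φ w * p.rho S' (v, w) ∂S'.M) ∂S'.F) with ht4'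
  obtain ⟨a1, b1⟩ := abs_le.mp hT1
  obtain ⟨a2, b2⟩ := abs_le.mp hT2
  obtain ⟨a3, b3⟩ := abs_le.mp hT3
  obtain ⟨a4, b4⟩ := abs_le.mp hT4
  rw [abs_le]
  constructor <;> linarith

/-- The Lipschitz-type bound for the couple drift term. -/
lemma JFM_diff (hω : 0 ≤ ω) (hωpos : 0 < ω) (p : Params ω) (hpmeas : p.Meas)
    {C : ℝ} (hbdd : p.Bounded C) {c : ℝ} (hc : 0 ≤ c) (hlip : p.Lipschitz c)
    (S S' : Comp ω) {B : ℝ} (hB : 0 ≤ B)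
    (hSF : (S.F univ).toReal ≤ B) (hSM : (S.M univ).toReal ≤ B)
    (hSFM : (S.FM univ).toReal ≤ B)
    (hS'F : (S'.F univ).toReal ≤ B) (hS'M : (S'.M univ).toReal ≤ B)
    (hS'FM : (S'.FM univ).toReal ≤ B)
    (r : ℝ) {ψ : A ω × A ω → ℝ} (hψ : Continuous ψ) (hψ1 : ∀ s, |ψ s| ≤ 1) :
    |JFM hω p S r ψ - JFM hω p S' r ψ| ≤
      (5 * c * B + c * B ^ 2 + 5 * C + 2 * C * B) * compDist S S' := by
  haveI := S.finF; haveI := S.finM; haveI := S.finFM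
  haveI := S'.finF; haveI := S'.finM; haveI := S'.finFM
  haveI : Nonempty (A ω) := ⟨ageZero hω⟩
  obtain ⟨P1, P2, P3, P4, P5, P6, P7, P8, P9, P10⟩ := hbdd S
  obtain ⟨Q1, Q2, Q3, Q4, Q5, Q6, Q7, Q8, Q9, Q10⟩ := hbdd S'
  obtain ⟨L1, L2, L3, L4, L5, L6, L7, L8, L9, L10⟩ := hlip S S'
  obtain ⟨m1, m2, m3, m4, m5, m6, m7, m8, m9, m10⟩ := hpmeas S
  obtain ⟨n1, n2, n3, n4, n5, n6, n7, n8, n9, n10⟩ := hpmeas S'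
  have hC0 : 0 ≤ C := le_trans (P3 (ageZero hω)).1 (P3 (ageZero hω)).2
  have hsum : compDist S S' = measDist S.F S'.F + measDist S.M S'.M
      + measDist S.FM S'.FM := rfl
  set d := compDist S S' with hdd
  have hd0 : 0 ≤ d := compDist_nonneg S S'
  set dF := measDist S.F S'.F with hdF
  set dM := measDist S.M S'.M with hdM
  set dFM := measDist S.FM S'.FM with hdFM
  have hdF0 : 0 ≤ dF := measDist_nonneg _ _
  have hdM0 : 0 ≤ dM := measDist_nonneg _ _
  have hdFM0 : 0 ≤ dFM := measDist_nonneg _ _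
  have sψc : Continuous (shift2 hω r ψ) := shift2_cont hω r hψ
  have sψ1 : ∀ s, |shift2 hω r ψ s| ≤ 1 := shift2_abs hω r hψ1
  have hcd : 0 ≤ c * d := mul_nonneg hc hd0
  have hCB0 : 0 ≤ C * B := mul_nonneg hC0 hB
  have hfF : C * dF ≤ C * d := mul_le_mul_of_nonneg_left (by linarith) hC0
  have hfM : C * dM ≤ C * d := mul_le_mul_of_nonneg_left (by linarith) hC0
  have hfFM : C * dFM ≤ C * d := mul_le_mul_of_nonneg_left (by linarith) hC0
  have hfBF : C * B * dF ≤ C * B * d := mul_le_mul_of_nonneg_left (by linarith) hCB0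
  have hfBM : C * B * dM ≤ C * B * d := mul_le_mul_of_nonneg_left (by linarith) hCB0
  have htotal : ((c * d + c * d + c * d) * B + (C + C + C) * dFM)
      + (c * d * B * B + C * B * dM + C * B * dF)
      ≤ (5 * c * B + c * B ^ 2 + 5 * C + 2 * C * B) * d := by nlinarith
  -- Term 1
  have hT1 : |(∫ q, (p.hF S q + p.hM S q + p.hFM S q) * shift2 hω r ψ q ∂S.FM)
      - ∫ q, (p.hF S' q + p.hM S' q + p.hFM S' q) * shift2 hω r ψ q ∂S'.FM| ≤
      (c * d + c * d + c * d) * B + (C + C + C) * dFM :=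
    integral_diff_bound S.FM S'.FM
      (((m1.add m2).add m5).mul sψc.measurable)
      (((n1.add n2).add n5).mul sψc.measurable)
      (fun s => abs_mul_le_one
        (le_trans (abs_add_le _ _) (add_le_add (le_trans (abs_add_le _ _)
          (add_le_add (abs_le_of_Icc (P1 s)) (abs_le_of_Icc (P2 s))))
          (abs_le_of_Icc (P5 s)))) (sψ1 _))
      (fun s => abs_mul_le_one
        (le_trans (abs_add_le _ _) (add_le_add (le_trans (abs_add_le _ _)
          (add_le_add (abs_le_of_Icc (Q1 s)) (abs_le_of_Icc (Q2 s))))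
          (abs_le_of_Icc (Q5 s)))) (sψ1 _))
      (by linarith)
      (fun s => by
        simp only [Pi.mul_apply, Pi.add_apply, Function.comp_apply]
        rw [← sub_mul]
        refine abs_mul_le_one ?_ (sψ1 _)
        have he : p.hF S s + p.hM S s + p.hFM S s
            - (p.hF S' s + p.hM S' s + p.hFM S' s)
            = (p.hF S s - p.hF S' s) + (p.hM S s - p.hM S' s)
              + (p.hFM S s - p.hFM S' s) := by ring
        rw [he]
        exact le_trans (abs_add_le _ _) (add_le_add (le_trans (abs_add_le _ _)
          (add_le_add (L1 s) (L2 s))) (L5 s)))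
      hSFM
  -- Term 2
  have hT2 : |(∫ v, (∫ w, shift2 hω r ψ (v, w) * p.rho S (v, w) ∂S.M) ∂S.F)
      - ∫ v, (∫ w, shift2 hω r ψ (v, w) * p.rho S' (v, w) ∂S'.M) ∂S'.F| ≤
      c * d * B * B + C * B * dM + C * B * dF :=
    double_int_bound S.F S'.F S.M S'.M (Φ := shift2 hω r ψ)
      sψc.measurable sψ1 m10 n10
      (fun s => abs_le_of_Icc (P10 s)) (fun s => abs_le_of_Icc (Q10 s))
      hcd L10 hB hSF hSM hS'M
  unfold JFM
  set t1 := (∫ q, (p.hF S q + p.hM S q + p.hFM S q) * shift2 hω r ψ q ∂S.FM) with ht1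
  set t1' := (∫ q, (p.hF S' q + p.hM S' q + p.hFM S' q) * shift2 hω r ψ q ∂S'.FM) with ht1'
  set t2 := (∫ v, (∫ w, shift2 hω r ψ (v, w) * p.rho S (v, w) ∂S.M) ∂S.F) with ht2
  set t2' := (∫ v, (∫ w, shift2 hω r ψ (v, w) * p.rho S' (v, w) ∂S'.M) ∂S'.F) with ht2'
  obtain ⟨a1, b1⟩ := abs_le.mp hT1
  obtain ⟨a2, b2⟩ := abs_le.mp hT2
  rw [abs_le]
  constructor <;> linarith

end ProblemSpecific

/-- Under the uniform boundedness and normed Lipschitz conditions on the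
monogamy parameters, two weakly continuous solutions of the mild monogamy limit system
with the same initial composition coincide on `[0,T]`. -/
theorem mild_monogamy_system_unique_solution
    (T ω : ℝ) (hT : 0 < T) (hω : 0 < ω)
    (p : Params ω) (hpmeas : p.Meas)
    (C : ℝ) (hC : 0 ≤ C) (hbdd : p.Bounded C)
    (c : ℝ) (hc : 0 ≤ c) (hlip : p.Lipschitz c)
    (S1 S2 : ℝ → Comp ω)
    (hS1cont : WeaklyContinuous T S1) (hS2cont : WeaklyContinuous T S2)
    (hS1 : MildSystem hω.le T p S1) (hS2 : MildSystem hω.le T p S2)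
    (h0F : (S1 0).F = (S2 0).F) (h0M : (S1 0).M = (S2 0).M)
    (h0FM : (S1 0).FM = (S2 0).FM) :
    ∀ t ∈ Icc (0:ℝ) T,
      (S1 t).F = (S2 t).F ∧ (S1 t).M = (S2 t).M ∧ (S1 t).FM = (S2 t).FM := by
  classical
  haveI : Nonempty (A ω) := ⟨ageZero hω.le⟩
  -- uniform mass bound on [0, T]
  obtain ⟨B1, hB1⟩ := isCompact_Icc.exists_bound_of_continuousOn
    (hS1cont.1 (fun _ => (1:ℝ)) continuous_const)
  obtain ⟨B2, hB2⟩ := isCompact_Icc.exists_bound_of_continuousOn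
    (hS1cont.2.1 (fun _ => (1:ℝ)) continuous_const)
  obtain ⟨B3, hB3⟩ := isCompact_Icc.exists_bound_of_continuousOn
    (hS1cont.2.2 (fun _ => (1:ℝ)) continuous_const)
  obtain ⟨B4, hB4⟩ := isCompact_Icc.exists_bound_of_continuousOn
    (hS2cont.1 (fun _ => (1:ℝ)) continuous_const)
  obtain ⟨B5, hB5⟩ := isCompact_Icc.exists_bound_of_continuousOn
    (hS2cont.2.1 (fun _ => (1:ℝ)) continuous_const)
  obtain ⟨B6, hB6⟩ := isCompact_Icc.exists_bound_of_continuousOn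
    (hS2cont.2.2 (fun _ => (1:ℝ)) continuous_const)
  obtain ⟨B, hBdef⟩ : ∃ B : ℝ, B = max 0 (max B1 (max B2 (max B3 (max B4 (max B5 B6)))))
    := ⟨_, rfl⟩
  have hB : 0 ≤ B := hBdef ▸ le_max_left _ _
  have hBB1 : B1 ≤ B := by rw [hBdef]; exact le_trans (le_max_left _ _) (le_max_right _ _)
  have hBB2 : B2 ≤ B := by
    rw [hBdef]
    exact le_trans (le_trans (le_max_left _ _) (le_max_right _ _)) (le_max_right _ _)
  have hBB3 : B3 ≤ B := by
    rw [hBdef]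
    exact le_trans (le_trans (le_trans (le_max_left _ _) (le_max_right _ _))
      (le_max_right _ _)) (le_max_right _ _)
  have hBB4 : B4 ≤ B := by
    rw [hBdef]
    exact le_trans (le_trans (le_trans (le_trans (le_max_left _ _) (le_max_right _ _))
      (le_max_right _ _)) (le_max_right _ _)) (le_max_right _ _)
  have hBB5 : B5 ≤ B := by
    rw [hBdef]
    exact le_trans (le_trans (le_trans (le_trans (le_trans (le_max_left _ _)
      (le_max_right _ _)) (le_max_right _ _)) (le_max_right _ _)) (le_max_right _ _))
      (le_max_right _ _)
  have hBB6 : B6 ≤ B := by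
    rw [hBdef]
    exact le_trans (le_trans (le_trans (le_trans (le_trans (le_max_right _ _)
      (le_max_right _ _)) (le_max_right _ _)) (le_max_right _ _)) (le_max_right _ _))
      (le_max_right _ _)
  have mass1F : ∀ t ∈ Icc (0:ℝ) T, (((S1 t).F) univ).toReal ≤ B := by
    intro t ht
    have h := hB1 t ht
    simp only [integral_const, smul_eq_mul, mul_one, Real.norm_eq_abs] at h
    exact le_trans (le_trans (le_abs_self _) h) hBB1
  have mass1M : ∀ t ∈ Icc (0:ℝ) T, (((S1 t).M) univ).toReal ≤ B := by
    intro t ht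
    have h := hB2 t ht
    simp only [integral_const, smul_eq_mul, mul_one, Real.norm_eq_abs] at h
    exact le_trans (le_trans (le_abs_self _) h) hBB2
  have mass1FM : ∀ t ∈ Icc (0:ℝ) T, (((S1 t).FM) univ).toReal ≤ B := by
    intro t ht
    have h := hB3 t ht
    simp only [integral_const, smul_eq_mul, mul_one, Real.norm_eq_abs] at h
    exact le_trans (le_trans (le_abs_self _) h) hBB3
  have mass2F : ∀ t ∈ Icc (0:ℝ) T, (((S2 t).F) univ).toReal ≤ B := by
    intro t ht
    have h := hB4 t ht
    simp only [integral_const, smul_eq_mul, mul_one, Real.norm_eq_abs] at h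
    exact le_trans (le_trans (le_abs_self _) h) hBB4
  have mass2M : ∀ t ∈ Icc (0:ℝ) T, (((S2 t).M) univ).toReal ≤ B := by
    intro t ht
    have h := hB5 t ht
    simp only [integral_const, smul_eq_mul, mul_one, Real.norm_eq_abs] at h
    exact le_trans (le_trans (le_abs_self _) h) hBB5
  have mass2FM : ∀ t ∈ Icc (0:ℝ) T, (((S2 t).FM) univ).toReal ≤ B := by
    intro t ht
    have h := hB6 t ht
    simp only [integral_const, smul_eq_mul, mul_one, Real.norm_eq_abs] at h
    exact le_trans (le_trans (le_abs_self _) h) hBB6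
  -- the Lipschitz constant
  obtain ⟨L0, hL0eq⟩ : ∃ L0 : ℝ, L0 = 5 * c * B + c * B ^ 2 + 5 * C + 2 * C * B := ⟨_, rfl⟩
  have hL00 : 0 ≤ L0 := by
    rw [hL0eq]
    have h1 : 0 ≤ 5 * c * B := by positivity
    have h2 : 0 ≤ c * B ^ 2 := by positivity
    have h3 : 0 ≤ 5 * C := by linarith
    have h4 : 0 ≤ 2 * C * B := by positivity
    linarith
  -- the core Grönwall-type inequality
  have core : ∀ t ∈ Icc (0:ℝ) T, ∀ G : ℝ → ℝ, IntervalIntegrable G volume 0 t →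
      (∀ u ∈ Ioc (0:ℝ) t, compDist (S1 u) (S2 u) ≤ G u) →
      (∀ u ∈ Icc (0:ℝ) t, 0 ≤ G u) →
      compDist (S1 t) (S2 t) ≤ 3 * (L0 * ∫ u in (0:ℝ)..t, G u) := by
    intro t ht G hGi hGmaj hGpos
    have ht0 : 0 ≤ t := ht.1
    have hIG : 0 ≤ ∫ u in (0:ℝ)..t, G u := intervalIntegral.integral_nonneg ht0 hGpos
    haveI := (S1 t).finF; haveI := (S1 t).finM; haveI := (S1 t).finFM
    haveI := (S2 t).finF; haveI := (S2 t).finM; haveI := (S2 t).finFM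
    have hF : measDist (S1 t).F (S2 t).F ≤ L0 * ∫ u in (0:ℝ)..t, G u := by
      refine ciSup_le fun f => ?_
      obtain ⟨i1, e1⟩ := hS1.1 f.1 f.2.1 t ht
      obtain ⟨i2, e2⟩ := hS2.1 f.1 f.2.1 t ht
      have key : (∫ v, f.1 v ∂(S1 t).F) - (∫ v, f.1 v ∂(S2 t).F)
          = ∫ u in (0:ℝ)..t,
              (JF hω.le p (S1 u) (t - u) f.1 - JF hω.le p (S2 u) (t - u) f.1) := by
        rw [intervalIntegral.integral_sub i1 i2, e1, e2, h0F]
        ring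
      rw [key]
      have hbnd : ∀ᵐ u ∂(volume.restrict (Set.uIoc (0:ℝ) t)),
          ‖JF hω.le p (S1 u) (t - u) f.1 - JF hω.le p (S2 u) (t - u) f.1‖ ≤ L0 * G u := by
        rw [uIoc_of_le ht0]
        refine (ae_restrict_iff' measurableSet_Ioc).mpr (ae_of_all _ fun u hu => ?_)
        have huI : u ∈ Icc (0:ℝ) T := ⟨hu.1.le, hu.2.trans ht.2⟩
        have hj := JF_diff hω.le hω p hpmeas hbdd hc hlip (S1 u) (S2 u) hB
          (mass1F u huI) (mass1M u huI) (mass1FM u huI)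
          (mass2F u huI) (mass2M u huI) (mass2FM u huI) (t - u) f.2.1 f.2.2
        rw [← hL0eq] at hj
        rw [Real.norm_eq_abs]
        exact le_trans hj (mul_le_mul_of_nonneg_left (hGmaj u hu) hL00)
      have hn := intervalIntegral.norm_integral_le_of_norm_le ht0
        (by rw [uIoc_of_le ht0] at hbnd; exact (ae_restrict_iff' measurableSet_Ioc).mp hbnd)
        (hGi.const_mul L0)
      rw [intervalIntegral.integral_const_mul, Real.norm_eq_abs] at hn
      exact hn
    have hM : measDist (S1 t).M (S2 t).M ≤ L0 * ∫ u in (0:ℝ)..t, G u := by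
      refine ciSup_le fun f => ?_
      obtain ⟨i1, e1⟩ := hS1.2.1 f.1 f.2.1 t ht
      obtain ⟨i2, e2⟩ := hS2.2.1 f.1 f.2.1 t ht
      have key : (∫ w, f.1 w ∂(S1 t).M) - (∫ w, f.1 w ∂(S2 t).M)
          = ∫ u in (0:ℝ)..t,
              (JM hω.le p (S1 u) (t - u) f.1 - JM hω.le p (S2 u) (t - u) f.1) := by
        rw [intervalIntegral.integral_sub i1 i2, e1, e2, h0M]
        ring
      rw [key]
      have hbnd : ∀ᵐ u ∂(volume.restrict (Set.uIoc (0:ℝ) t)),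
          ‖JM hω.le p (S1 u) (t - u) f.1 - JM hω.le p (S2 u) (t - u) f.1‖ ≤ L0 * G u := by
        rw [uIoc_of_le ht0]
        refine (ae_restrict_iff' measurableSet_Ioc).mpr (ae_of_all _ fun u hu => ?_)
        have huI : u ∈ Icc (0:ℝ) T := ⟨hu.1.le, hu.2.trans ht.2⟩
        have hj := JM_diff hω.le hω p hpmeas hbdd hc hlip (S1 u) (S2 u) hB
          (mass1F u huI) (mass1M u huI) (mass1FM u huI)
          (mass2F u huI) (mass2M u huI) (mass2FM u huI) (t - u) f.2.1 f.2.2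
        rw [← hL0eq] at hj
        rw [Real.norm_eq_abs]
        exact le_trans hj (mul_le_mul_of_nonneg_left (hGmaj u hu) hL00)
      have hn := intervalIntegral.norm_integral_le_of_norm_le ht0
        (by rw [uIoc_of_le ht0] at hbnd; exact (ae_restrict_iff' measurableSet_Ioc).mp hbnd)
        (hGi.const_mul L0)
      rw [intervalIntegral.integral_const_mul, Real.norm_eq_abs] at hn
      exact hn
    have hFM : measDist (S1 t).FM (S2 t).FM ≤ L0 * ∫ u in (0:ℝ)..t, G u := by
      refine ciSup_le fun f => ?_
      obtain ⟨i1, e1⟩ := hS1.2.2 f.1 f.2.1 t ht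
      obtain ⟨i2, e2⟩ := hS2.2.2 f.1 f.2.1 t ht
      have key : (∫ q, f.1 q ∂(S1 t).FM) - (∫ q, f.1 q ∂(S2 t).FM)
          = ∫ u in (0:ℝ)..t,
              (JFM hω.le p (S1 u) (t - u) f.1 - JFM hω.le p (S2 u) (t - u) f.1) := by
        rw [intervalIntegral.integral_sub i1 i2, e1, e2, h0FM]
        ring
      rw [key]
      have hbnd : ∀ᵐ u ∂(volume.restrict (Set.uIoc (0:ℝ) t)),
          ‖JFM hω.le p (S1 u) (t - u) f.1 - JFM hω.le p (S2 u) (t - u) f.1‖ ≤ L0 * G u := by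
        rw [uIoc_of_le ht0]
        refine (ae_restrict_iff' measurableSet_Ioc).mpr (ae_of_all _ fun u hu => ?_)
        have huI : u ∈ Icc (0:ℝ) T := ⟨hu.1.le, hu.2.trans ht.2⟩
        have hj := JFM_diff hω.le hω p hpmeas hbdd hc hlip (S1 u) (S2 u) hB
          (mass1F u huI) (mass1M u huI) (mass1FM u huI)
          (mass2F u huI) (mass2M u huI) (mass2FM u huI) (t - u) f.2.1 f.2.2
        rw [← hL0eq] at hj
        rw [Real.norm_eq_abs]
        exact le_trans hj (mul_le_mul_of_nonneg_left (hGmaj u hu) hL00)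
      have hn := intervalIntegral.norm_integral_le_of_norm_le ht0
        (by rw [uIoc_of_le ht0] at hbnd; exact (ae_restrict_iff' measurableSet_Ioc).mp hbnd)
        (hGi.const_mul L0)
      rw [intervalIntegral.integral_const_mul, Real.norm_eq_abs] at hn
      exact hn
    have hsum : compDist (S1 t) (S2 t) = measDist (S1 t).F (S2 t).F
        + measDist (S1 t).M (S2 t).M + measDist (S1 t).FM (S2 t).FM := rfl
    rw [hsum]
    linarith
  -- base bound
  have base : ∀ t ∈ Icc (0:ℝ) T, compDist (S1 t) (S2 t) ≤ 6 * B := by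
    intro t ht
    haveI := (S1 t).finF; haveI := (S1 t).finM; haveI := (S1 t).finFM
    haveI := (S2 t).finF; haveI := (S2 t).finM; haveI := (S2 t).finFM
    have h1 := measDist_le_mass (S1 t).F (S2 t).F
    have h2 := measDist_le_mass (S1 t).M (S2 t).M
    have h3 := measDist_le_mass (S1 t).FM (S2 t).FM
    have hsum : compDist (S1 t) (S2 t) = measDist (S1 t).F (S2 t).F
        + measDist (S1 t).M (S2 t).M + measDist (S1 t).FM (S2 t).FM := rfl
    rw [hsum]
    have := mass1F t ht; have := mass1M t ht; have := mass1FM t ht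
    have := mass2F t ht; have := mass2M t ht; have := mass2FM t ht
    linarith
  -- Picard iteration
  have iter : ∀ n : ℕ, ∀ t ∈ Icc (0:ℝ) T,
      compDist (S1 t) (S2 t) ≤ (6 * B * (3 * L0) ^ n / n.factorial) * t ^ n := by
    intro n
    induction n with
    | zero =>
      intro t ht
      simpa using base t ht
    | succ n ih =>
      intro t ht
      have hKn : (0:ℝ) ≤ 6 * B * (3 * L0) ^ n / n.factorial := by
        apply div_nonneg
        · exact mul_nonneg (by linarith) (pow_nonneg (by linarith) n)
        · positivity
      have hGmaj : ∀ u ∈ Ioc (0:ℝ) t, compDist (S1 u) (S2 u) ≤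
          (6 * B * (3 * L0) ^ n / n.factorial) * u ^ n := fun u hu =>
        ih u ⟨hu.1.le, hu.2.trans ht.2⟩
      have hGpos : ∀ u ∈ Icc (0:ℝ) t, 0 ≤ (6 * B * (3 * L0) ^ n / n.factorial) * u ^ n :=
        fun u hu => mul_nonneg hKn (pow_nonneg hu.1 n)
      have hGi : IntervalIntegrable
          (fun u => (6 * B * (3 * L0) ^ n / n.factorial) * u ^ n) volume 0 t :=
        (continuous_const.mul (continuous_pow n)).intervalIntegrable 0 t
      have hcore := core t ht _ hGi hGmaj hGpos
      refine hcore.trans ?_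
      have hint : (∫ u in (0:ℝ)..t, (6 * B * (3 * L0) ^ n / n.factorial) * u ^ n)
          = (6 * B * (3 * L0) ^ n / n.factorial) * (t ^ (n + 1) / (n + 1)) := by
        rw [intervalIntegral.integral_const_mul, integral_pow]
        norm_num
      rw [hint]
      have hfacpos : (0:ℝ) < n.factorial := by
        exact_mod_cast Nat.factorial_pos n
      have hfac : ((n + 1).factorial : ℝ) = (n + 1) * n.factorial := by
        exact_mod_cast Nat.factorial_succ n
      apply le_of_eq
      rw [pow_succ (3 * L0) n, hfac]
      have hn1 : (0:ℝ) < (n:ℝ) + 1 := by positivity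
      field_simp
  -- conclusion
  intro t ht
  have h0 : compDist (S1 t) (S2 t) ≤ 0 := by
    have hlim : Filter.Tendsto (fun n : ℕ => 6 * B * ((3 * L0 * t) ^ n / n.factorial))
        Filter.atTop (nhds 0) := by
      have h := FloorSemiring.tendsto_pow_div_factorial_atTop (K := ℝ) (3 * L0 * t)
      have := h.const_mul (6 * B)
      simpa using this
    refine ge_of_tendsto hlim (Filter.Eventually.of_forall fun n => ?_)
    calc compDist (S1 t) (S2 t) ≤ (6 * B * (3 * L0) ^ n / n.factorial) * t ^ n :=
        iter n t ht
      _ = 6 * B * ((3 * L0 * t) ^ n / n.factorial) := by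
          rw [mul_pow]; ring
  have hD0 : compDist (S1 t) (S2 t) = 0 := le_antisymm h0 (compDist_nonneg _ _)
  haveI := (S1 t).finF; haveI := (S1 t).finM; haveI := (S1 t).finFM
  haveI := (S2 t).finF; haveI := (S2 t).finM; haveI := (S2 t).finFM
  have n1 := measDist_nonneg (S1 t).F (S2 t).F
  have n2 := measDist_nonneg (S1 t).M (S2 t).M
  have n3 := measDist_nonneg (S1 t).FM (S2 t).FM
  have hsum : compDist (S1 t) (S2 t) = measDist (S1 t).F (S2 t).F
      + measDist (S1 t).M (S2 t).M + measDist (S1 t).FM (S2 t).FM := rfl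
  rw [hsum] at hD0
  refine ⟨eq_of_measDist_eq_zero _ _ (by linarith),
    eq_of_measDist_eq_zero _ _ (by linarith),
    eq_of_measDist_eq_zero _ _ (by linarith)⟩


end Monogamy6
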